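/- A connected bicolored ribbon graph with d edges, encoded by permutations σ, τ ∈ S_d (acting transitively), corresponds to a hypermap of genus g on d darts where g is determined by 2 - 2g = c(σ) + c(τ) + c((στ)⁻¹) - d, with c(·) denoting the number of cycles; moreover 2 - 2g ≤ c(σ) + c(τ) + c(στ) holds with g ≥ 0, i.e., c(σ) + c(τ) + c(στ) ≤ d + 2 for any σ, τ generating a transitive subgroup of S_d. -/

import Mathlib

/-- The number of cycles of a permutation of `{1,…,d}`, counting fixed points
as cycles of length 1:  `d` minus the number of points moved, plus the number
of nontrivial cycles. -/
def numCycles {d : ℕ} (π : Equiv.Perm (Fin d)) : ℕ :=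
  (d - π.cycleType.sum) + π.cycleType.card

/-!
The cycles of a permutation and the orbits of `⟨σ, τ⟩` are the classes of equivalence relations,
and replacing a generator `f` by `swap a b * f` changes such a relation only up to merging the
classes of `a` and `b`. Since moreover `sign π = (-1) ^ (d + c(π))`, multiplying by a transposition
changes the number of cycles by exactly one: `c(swap a b * ρ) = c(ρ) + 1` if `a` and `b` lie in one
cycle of `ρ`, and `c(ρ) - 1` otherwise.

The bound is proved for arbitrary pairs in the form `c(σ) + c(τ) + c(στ) ≤ d + 2 · #orbits`, by
induction on the support of `σ`, with equality for `σ = 1`. Passing from `σ` with `σ a = a` to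
`swap a b * σ` lowers `c(σ)` by one and changes `c(στ)` by one. If `c(στ)` goes up, `a` and `b`
already share a cycle of `στ`, hence an orbit of `⟨σ, τ⟩`, and the number of orbits is unchanged;
otherwise it drops by at most one. The parity is the multiplicativity of the sign.
-/

open Equiv Equiv.Perm MulAction Subgroup

namespace Setoid

variable {α : Type*} {r s : Setoid α} {a b : α}

def merge (r : Setoid α) (a b : α) : Setoid α where
  r x y := r x y ∨ (r x a ∨ r x b) ∧ (r y a ∨ r y b)
  iseqv := by
    refine ⟨fun x ↦ .inl (r.refl' x), ?_, ?_⟩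
    · rintro x y (h | ⟨hx, hy⟩)
      exacts [.inl (r.symm' h), .inr ⟨hy, hx⟩]
    · rintro x y z (h | ⟨hx, hy⟩) (h' | ⟨hy', hz⟩)
      · exact .inl (r.trans' h h')
      · exact .inr ⟨hy'.imp (r.trans' h) (r.trans' h), hz⟩
      · exact .inr ⟨hx, hy.imp (r.trans' (r.symm' h')) (r.trans' (r.symm' h'))⟩
      · exact .inr ⟨hx, hz⟩

theorem le_merge : r ≤ r.merge a b := fun _ _ ↦ .inl

theorem merge_rel : r.merge a b a b := .inr ⟨.inl (r.refl' a), .inr (r.refl' b)⟩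

theorem merge_le (h : r ≤ s) (hab : s a b) : r.merge a b ≤ s := by
  rintro x y (hxy | ⟨hx, hy⟩)
  · exact h hxy
  · have hxb : s x b := hx.elim (fun hxa ↦ s.trans' (h hxa) hab) (h ·)
    have hyb : s y b := hy.elim (fun hya ↦ s.trans' (h hya) hab) (h ·)
    exact s.trans' hxb (s.symm' hyb)

theorem merge_eq_self (h : r a b) : r.merge a b = r :=
  le_antisymm (merge_le le_rfl h) le_merge

theorem rel_swap_apply [DecidableEq α] (h : r a b) (x : α) : r (swap a b x) x := by
  rcases eq_or_ne x a with rfl | hxa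
  · simpa using r.symm' h
  rcases eq_or_ne x b with rfl | hxb
  · simpa using h
  · rw [swap_apply_of_ne_of_ne hxa hxb]

variable [Finite α]

theorem card_quotient_le_card_merge_add_one (r : Setoid α) (a b : α) :
    Nat.card (Quotient r) ≤ Nat.card (Quotient (r.merge a b)) + 1 := by
  classical
  let g : α → Option (Quotient (r.merge a b)) := fun x ↦ if r x a then none else some ⟦x⟧
  have hker : r = ker g := by
    ext x y
    rw [ker_def]
    by_cases hx : r x a <;> by_cases hy : r y a <;> simp only [g, hx, hy, if_true, if_false,
      reduceCtorEq, Option.some.injEq, Quotient.eq, iff_true, iff_false]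
    · exact r.trans' hx (r.symm' hy)
    · exact fun hxy ↦ hy (r.trans' (r.symm' hxy) hx)
    · exact fun hxy ↦ hx (r.trans' hxy hy)
    · refine ⟨fun hxy ↦ .inl hxy, ?_⟩
      rintro (hxy | ⟨hx' | hxb, hy' | hyb⟩)
      all_goals first | exact hxy | contradiction | exact r.trans' hxb (r.symm' hyb)
  have hcard := Nat.card_le_card_of_injective _ (kerLift_injective g)
  rwa [← hker, Finite.card_option] at hcard

theorem card_quotient_merge_lt (h : ¬ r a b) :
    Nat.card (Quotient (r.merge a b)) < Nat.card (Quotient r) := by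
  have hsurj := Quotient.map_surjective (f := id) (le_merge (r := r) (a := a) (b := b))
    Function.surjective_id
  by_contra! hle
  have hab : (⟦a⟧ : Quotient r) = ⟦b⟧ :=
    (hsurj.bijective_of_nat_card_le hle).injective (Quotient.sound merge_rel)
  exact h (Quotient.exact hab)

theorem card_quotient_eq_card_merge_add (r : Setoid α) (a b : α) [Decidable (r a b)] :
    Nat.card (Quotient r) = Nat.card (Quotient (r.merge a b)) + if r a b then 0 else 1 := by
  split_ifs with h
  · rw [merge_eq_self h, add_zero]
  · exact le_antisymm (card_quotient_le_card_merge_add_one r a b) (card_quotient_merge_lt h)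

end Setoid

namespace Equiv.Perm

variable {α : Type*}

theorem orbitRel_closure_le {S : Set (Perm α)} {r : Setoid α} (h : ∀ s ∈ S, ∀ x, r (s x) x) :
    orbitRel (closure S) α ≤ r := by
  suffices ∀ g ∈ closure S, ∀ x, r (g x) x by
    rintro _ y ⟨⟨g, hg⟩, rfl⟩
    exact this g hg y
  intro g hg
  induction hg using closure_induction with
  | mem s hs => exact h s hs
  | one => exact r.refl'
  | mul g k _ _ hg hk => exact fun x ↦ r.trans' (hg (k x)) (hk x)
  | inv g _ hg => exact fun x ↦ by simpa using r.symm' (hg (g⁻¹ x))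

theorem orbitRel_apply_of_mem {G : Subgroup (Perm α)} {g : Perm α} (hg : g ∈ G) (x : α) :
    orbitRel G α (g x) x :=
  ⟨⟨g, hg⟩, rfl⟩

theorem orbitRel_zpowers_iff {f : Perm α} {x y : α} :
    orbitRel (zpowers f) α x y ↔ f.SameCycle x y := by
  rw [orbitRel_apply, mem_orbit_iff, sameCycle_comm]
  simp [SameCycle, exists_zpowers, Subgroup.smul_def, Perm.smul_def]

theorem merge_orbitRel_closure_insert_swap_mul [DecidableEq α] (S : Set (Perm α)) (f : Perm α)
    (a b : α) : (orbitRel (closure (insert (swap a b * f) S)) α).merge a b =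
      (orbitRel (closure (insert f S)) α).merge a b := by
  suffices key : ∀ f g : Perm α, swap a b * f = g →
      (orbitRel (closure (insert g S)) α).merge a b ≤
        (orbitRel (closure (insert f S)) α).merge a b from
    le_antisymm (key f _ rfl) (key _ f (swap_mul_self_mul a b f))
  rintro f _ rfl
  refine Setoid.merge_le (orbitRel_closure_le ?_) Setoid.merge_rel
  rintro s (rfl | hs) x
  · exact Setoid.trans' _ (Setoid.rel_swap_apply Setoid.merge_rel (f x))
      (Setoid.le_merge (orbitRel_apply_of_mem (subset_closure (Set.mem_insert f S)) x))
  · exact Setoid.le_merge (orbitRel_apply_of_mem (subset_closure (Set.mem_insert_of_mem f hs)) x)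

theorem card_quotient_orbitRel_zpowers [Fintype α] [DecidableEq α] (π : Perm α) :
    Nat.card (Quotient (orbitRel (zpowers π) α)) =
      (Fintype.card α - π.cycleType.sum) + π.cycleType.card := by
  let f : α → Function.fixedPoints π ⊕ π.cycleFactorsFinset := fun x ↦
    if h : π x = x then .inl ⟨x, h⟩
    else .inr ⟨π.cycleOf x, cycleOf_mem_cycleFactorsFinset_iff.2 (mem_support.2 h)⟩
  have hker : orbitRel (zpowers π) α = Setoid.ker f := by
    ext x y
    rw [orbitRel_zpowers_iff, Setoid.ker_def]
    by_cases hx : π x = x <;> by_cases hy : π y = y <;> simp [f, hx, hy, Subtype.ext_iff]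
    · exact ⟨fun h ↦ h.eq_of_left hx, fun h ↦ h ▸ SameCycle.refl π x⟩
    · exact fun h ↦ hy (h.apply_eq_self_iff.1 hx)
    · exact fun h ↦ hx (h.apply_eq_self_iff.2 hy)
    · exact sameCycle_iff_cycleOf_eq_of_mem_support (mem_support.2 hx) (mem_support.2 hy)
  have hsurj : Function.Surjective f := by
    rintro (⟨x, hx⟩ | ⟨c, hc⟩)
    · exact ⟨x, by simp [f, hx.eq]⟩
    · obtain ⟨x, hx⟩ := (mem_cycleFactorsFinset_iff.1 hc).1.nonempty_support
      have hπx : π x ≠ x := mem_support.1 (mem_cycleFactorsFinset_support_le hc hx)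
      exact ⟨x, by simp [f, hπx, cycle_is_cycleOf hx hc]⟩
  rw [hker, Nat.card_congr (Setoid.quotientKerEquivOfSurjective f hsurj), Nat.card_sum,
    Nat.card_eq_fintype_card, card_fixedPoints, Nat.card_eq_fintype_card]
  simp [cycleType_def]

end Equiv.Perm

section NumCycles

variable {d : ℕ}

theorem numCycles_eq_card_quotient (π : Perm (Fin d)) :
    numCycles π = Nat.card (Quotient (orbitRel (zpowers π) (Fin d))) := by
  rw [card_quotient_orbitRel_zpowers, Fintype.card_fin, numCycles]

theorem sign_eq_negOnePow_numCycles (π : Perm (Fin d)) :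
    sign π = Int.negOnePow (d + numCycles π : ℕ) := by
  have hsum : π.cycleType.sum ≤ d := by
    simpa [sum_cycleType] using π.support.card_le_univ
  have hexp : d + numCycles π =
      π.cycleType.sum + π.cycleType.card + 2 * (d - π.cycleType.sum) := by
    unfold numCycles
    omega
  rw [sign_of_cycleType, hexp, Nat.cast_add, Nat.cast_mul, Nat.cast_ofNat, Int.negOnePow_add,
    Int.negOnePow_two_mul, mul_one, Int.negOnePow_def, zpow_natCast]

theorem numCycles_swap_mul_add_mod_two {a b : Fin d} (hab : a ≠ b) (ρ : Perm (Fin d)) :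
    (numCycles (swap a b * ρ) + numCycles ρ) % 2 = 1 := by
  have hsign := sign_mul (swap a b) ρ
  rw [sign_swap hab, sign_eq_negOnePow_numCycles, sign_eq_negOnePow_numCycles, neg_one_mul,
    ← Int.negOnePow_succ, Int.negOnePow_eq_iff, Int.even_iff] at hsign
  omega

theorem numCycles_swap_mul {a b : Fin d} (hab : a ≠ b) (ρ : Perm (Fin d)) :
    (numCycles (swap a b * ρ) : ℤ) = numCycles ρ + if ρ.SameCycle a b then 1 else -1 := by
  classical
  have hmerge : (orbitRel (zpowers (swap a b * ρ)) (Fin d)).merge a b =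
      (orbitRel (zpowers ρ) (Fin d)).merge a b := by
    rw [zpowers_eq_closure, zpowers_eq_closure, Set.singleton_def, Set.singleton_def]
    exact merge_orbitRel_closure_insert_swap_mul ∅ ρ a b
  have hg := Setoid.card_quotient_eq_card_merge_add (orbitRel (zpowers (swap a b * ρ)) (Fin d)) a b
  have hρ := Setoid.card_quotient_eq_card_merge_add (orbitRel (zpowers ρ) (Fin d)) a b
  rw [hmerge, ← numCycles_eq_card_quotient] at hg
  rw [← numCycles_eq_card_quotient] at hρ
  have hpar := numCycles_swap_mul_add_mod_two hab ρ
  simp only [orbitRel_zpowers_iff] at hg hρ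
  split_ifs at hg hρ ⊢ <;> omega

theorem numCycles_add_le_of_swap_mul {σ τ : Perm (Fin d)} {a b : Fin d} (hab : a ≠ b)
    (ha : σ a = a)
    (h : numCycles σ + numCycles τ + numCycles (σ * τ) ≤
      d + 2 * Nat.card (Quotient (orbitRel (closure {σ, τ}) (Fin d)))) :
    numCycles (swap a b * σ) + numCycles τ + numCycles (swap a b * σ * τ) ≤
      d + 2 * Nat.card (Quotient (orbitRel (closure {swap a b * σ, τ}) (Fin d))) := by
  classical
  have hσ := numCycles_swap_mul hab σ
  rw [if_neg fun h ↦ hab (h.eq_of_left ha)] at hσ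
  have hρ := numCycles_swap_mul hab (σ * τ)
  rw [← mul_assoc] at hρ
  have hO : orbitRel (closure {swap a b * σ, τ}) (Fin d) =
      (orbitRel (closure {σ, τ}) (Fin d)).merge a b := by
    rw [← merge_orbitRel_closure_insert_swap_mul {τ} σ a b, Setoid.merge_eq_self]
    have hba := orbitRel_apply_of_mem (subset_closure (Set.mem_insert (swap a b * σ) {τ})) a
    rw [mul_apply, ha, swap_apply_left] at hba
    exact Setoid.symm' _ hba
  have hcard := Setoid.card_quotient_eq_card_merge_add (orbitRel (closure {σ, τ}) (Fin d)) a b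
  rw [← hO] at hcard
  by_cases hrel : orbitRel (closure {σ, τ}) (Fin d) a b
  · rw [if_pos hrel] at hcard
    split_ifs at hρ <;> omega
  · have hsc : ¬(σ * τ).SameCycle a b := by
      rintro ⟨i, rfl⟩
      have hmem : (σ * τ) ^ i ∈ closure {σ, τ} := zpow_mem (mul_mem
        (subset_closure (Set.mem_insert σ {τ})) (subset_closure (Set.mem_insert_of_mem σ rfl))) i
      exact hrel (Setoid.symm' _ (orbitRel_apply_of_mem hmem a))
    rw [if_neg hrel] at hcard
    rw [if_neg hsc] at hρ
    omega

theorem numCycles_add_numCycles_add_numCycles_mul_le (σ τ : Perm (Fin d)) :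
    numCycles σ + numCycles τ + numCycles (σ * τ) ≤
      d + 2 * Nat.card (Quotient (orbitRel (closure {σ, τ}) (Fin d))) := by
  induction hn : σ.support.card using Nat.strong_induction_on generalizing σ with
  | _ n ih =>
  rcases eq_or_ne σ 1 with rfl | hσ
  · rw [one_mul, closure_insert_one, ← zpowers_eq_closure, ← numCycles_eq_card_quotient]
    simp [numCycles]
    omega
  · obtain ⟨a, ha⟩ : ∃ a, σ a ≠ a := not_forall.1 fun h ↦ hσ (Equiv.ext h)
    have key := numCycles_add_le_of_swap_mul (σ := swap a (σ a) * σ) (τ := τ) (Ne.symm ha)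
      (by simp) (ih _ (hn ▸ card_support_swap_mul ha) _ rfl)
    rwa [swap_mul_self_mul] at key

theorem numCycles_add_numCycles_add_numCycles_mul_mod_two (σ τ : Perm (Fin d)) :
    (numCycles σ + numCycles τ + numCycles (σ * τ)) % 2 = d % 2 := by
  have hsign := sign_mul σ τ
  rw [sign_eq_negOnePow_numCycles, sign_eq_negOnePow_numCycles, sign_eq_negOnePow_numCycles,
    ← Int.negOnePow_add, Int.negOnePow_eq_iff, Int.even_iff] at hsign
  omega

end NumCycles

/-- A hypermap of genus `g` on `d` darts is a pair `σ, τ ∈ S_d` generating a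
transitive subgroup, with `2 - 2g = c(σ) + c(τ) + c(στ) - d`.  Since `g ≥ 0`
and the genus is an integer, for any such transitive pair one has
`c(σ) + c(τ) + c(στ) ≤ d + 2` and `c(σ) + c(τ) + c(στ) ≡ d (mod 2)`. -/
theorem hypermap_genus_bound_and_parity (d : ℕ) (σ τ : Equiv.Perm (Fin d))
    (htrans : ∀ x y : Fin d,
      ∃ g ∈ Subgroup.closure ({σ, τ} : Set (Equiv.Perm (Fin d))), g x = y) :
    numCycles σ + numCycles τ + numCycles (σ * τ) ≤ d + 2 ∧
      (numCycles σ + numCycles τ + numCycles (σ * τ)) % 2 = d % 2 := by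
  have horbits : Nat.card (Quotient (orbitRel (closure {σ, τ}) (Fin d))) ≤ 1 := by
    refine Finite.card_le_one_iff_subsingleton.2 (Quotient.subsingleton_iff.2 ?_)
    refine Setoid.eq_top_iff.2 fun x y ↦ ?_
    obtain ⟨g, hg, rfl⟩ := htrans y x
    exact orbitRel_apply_of_mem hg y
  exact ⟨(numCycles_add_numCycles_add_numCycles_mul_le σ τ).trans (by omega),
    numCycles_add_numCycles_add_numCycles_mul_mod_two σ τ⟩
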